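/- arXiv:1905.10155 — 2 statements merged into one kernel-verified Lean document; each statement's English description precedes it below -/
import Mathlib

section
/- Let $\mu_1 = \mathcal{N}(m_1, \Sigma_1)$ and $\mu_2 = \mathcal{N}(m_2, \Sigma_2)$ be nondegenerate Gaussian measures on $\mathbb{R}^d$ with $\Sigma_1, \Sigma_2$ positive definite, and let $T(x) = m_2 + A(x - m_1)$ with $A = \Sigma_1^{-1/2}(\Sigma_1^{1/2}\Sigma_2\Sigma_1^{1/2})^{1/2}\Sigma_1^{-1/2}$. Then $T_\# \mu_1 = \mu_2$. -/
open Matrix MeasureTheory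

/-- The symmetric positive semidefinite square root of a matrix (zero if the
matrix is not positive semidefinite). -/
noncomputable def msqrt {d : ℕ} (A : Matrix (Fin d) (Fin d) ℝ) : Matrix (Fin d) (Fin d) ℝ :=
  open scoped Classical in
  if h : A.PosSemidef then
    (h.1.eigenvectorUnitary : Matrix (Fin d) (Fin d) ℝ) *
      diagonal ((↑) ∘ Real.sqrt ∘ h.1.eigenvalues) *
      (star h.1.eigenvectorUnitary : Matrix (Fin d) (Fin d) ℝ)
  else 0


/-- The operator (spectral) norm of a matrix, as the norm of the induced map on
Euclidean space. -/
noncomputable def opNorm {d : ℕ} (A : Matrix (Fin d) (Fin d) ℝ) : ℝ :=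
  ‖LinearMap.toContinuousLinearMap (Matrix.toEuclideanLin A)‖

/-- The smallest eigenvalue of a symmetric matrix (zero if not symmetric). -/
noncomputable def lamMin {d : ℕ} (A : Matrix (Fin d) (Fin d) ℝ) : ℝ :=
  open scoped Classical in
  if h : A.IsHermitian then ⨅ i, h.eigenvalues i else 0

/-- Interpret a plain vector as a point of Euclidean space. -/
noncomputable def toE {d : ℕ} (v : Fin d → ℝ) : EuclideanSpace ℝ (Fin d) :=
  (WithLp.equiv 2 (Fin d → ℝ)).symm v

/-- The matrix geometric mean `B # C = B^{1/2} (B^{-1/2} C B^{-1/2})^{1/2} B^{1/2}`. -/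
noncomputable def gmean {d : ℕ} (B C : Matrix (Fin d) (Fin d) ℝ) : Matrix (Fin d) (Fin d) ℝ :=
  msqrt B * msqrt ((msqrt B)⁻¹ * C * (msqrt B)⁻¹) * msqrt B

/-- Interpret a point of Euclidean space as a plain vector. -/
noncomputable def fromE {d : ℕ} (v : EuclideanSpace ℝ (Fin d)) : Fin d → ℝ :=
  WithLp.equiv 2 (Fin d → ℝ) v
/-- Density of the nondegenerate multivariate Gaussian `N(m, S)` on Euclidean space. -/
noncomputable def gaussianPdf {d : ℕ} (m : EuclideanSpace ℝ (Fin d))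
    (S : Matrix (Fin d) (Fin d) ℝ) (x : EuclideanSpace ℝ (Fin d)) : ℝ :=
  (Real.sqrt ((2 * Real.pi) ^ d * S.det))⁻¹ *
    Real.exp (-(1/2) * ∑ i, ∑ j, (x i - m i) * S⁻¹ i j * (x j - m j))

/-- The nondegenerate multivariate Gaussian measure `N(m, S)`. -/
noncomputable def gaussianMeasure {d : ℕ} (m : EuclideanSpace ℝ (Fin d))
    (S : Matrix (Fin d) (Fin d) ℝ) : Measure (EuclideanSpace ℝ (Fin d)) :=
  volume.withDensity fun x => ENNReal.ofReal (gaussianPdf m S x)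

/- ### Auxiliary lemmas -/

open scoped MatrixOrder in
private lemma msqrt_facts {d : ℕ} {A : Matrix (Fin d) (Fin d) ℝ} (h : A.PosSemidef) :
    (msqrt A).PosSemidef ∧ msqrt A * msqrt A = A := by
  have e : msqrt A = cfc Real.sqrt A := by
    rw [h.1.cfc_eq]; simp only [msqrt, dif_pos h]; rfl
  have h0 : 0 ≤ A := Matrix.nonneg_iff_posSemidef.mpr h
  constructor
  · rw [e, ← Matrix.nonneg_iff_posSemidef]; exact cfc_nonneg (fun x _ => Real.sqrt_nonneg x)
  · rw [e, ← cfc_mul ..]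
    conv_rhs => rw [← cfc_id' ℝ A]
    exact cfc_congr fun x hx => Real.mul_self_sqrt (spectrum_nonneg_of_nonneg h0 hx)

private lemma matrix_facts {d : ℕ} {S1 S2 : Matrix (Fin d) (Fin d) ℝ}
    (h1 : S1.PosDef) (h2 : S2.PosDef)
    (A : Matrix (Fin d) (Fin d) ℝ)
    (hA : A = (msqrt S1)⁻¹ * msqrt (msqrt S1 * S2 * msqrt S1) * (msqrt S1)⁻¹) :
    Aᵀ = A ∧ A * S1 * A = S2 ∧ A.det ≠ 0 := by
  set B := msqrt S1 with hBdef
  have h := h1.posSemidef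
  have hBps : B.PosSemidef := (msqrt_facts h).1
  have hmul : B * B = S1 := (msqrt_facts h).2
  have hBdet : B.det ≠ 0 := by
    intro hd
    have := h1.det_pos
    rw [← hmul, det_mul, hd, mul_zero] at this
    exact lt_irrefl _ this
  have hBt : Bᵀ = B := by
    rw [← conjTranspose_eq_transpose_of_trivial]; exact hBps.1
  have hMps : (B * S2 * B).PosSemidef := by
    have := h2.posSemidef.mul_mul_conjTranspose_same B
    rwa [conjTranspose_eq_transpose_of_trivial, hBt] at this
  set C := msqrt (B * S2 * B) with hCdef
  have hCps : C.PosSemidef := (msqrt_facts hMps).1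
  have hCC : C * C = B * S2 * B := (msqrt_facts hMps).2
  have hCt : Cᵀ = C := by
    rw [← conjTranspose_eq_transpose_of_trivial]; exact hCps.1
  have hiB : B⁻¹ * B = 1 := nonsing_inv_mul B hBdet.isUnit
  have hBi : B * B⁻¹ = 1 := mul_nonsing_inv B hBdet.isUnit
  have e1 : ∀ X : Matrix (Fin d) (Fin d) ℝ, B⁻¹ * (B * X) = X := fun X => by
    rw [← Matrix.mul_assoc, hiB, Matrix.one_mul]
  have e2 : ∀ X : Matrix (Fin d) (Fin d) ℝ, B * (B⁻¹ * X) = X := fun X => by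
    rw [← Matrix.mul_assoc, hBi, Matrix.one_mul]
  have e3 : ∀ X : Matrix (Fin d) (Fin d) ℝ, C * (C * X) = B * (S2 * (B * X)) := fun X => by
    rw [← Matrix.mul_assoc, hCC]; simp [Matrix.mul_assoc]
  have hASA : A * S1 * A = S2 := by
    rw [hA, ← hmul]
    simp only [Matrix.mul_assoc, e1, e2, e3, hBi, Matrix.mul_one]
  have hAt : Aᵀ = A := by
    rw [hA]
    simp only [Matrix.transpose_mul, transpose_nonsing_inv, hBt, hCt, Matrix.mul_assoc]
  refine ⟨hAt, hASA, ?_⟩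
  intro hd
  have := h2.det_pos
  rw [← hASA, det_mul, det_mul, hd, zero_mul, mul_zero] at this
  exact lt_irrefl _ this

private lemma sum_quad {d : ℕ} (M : Matrix (Fin d) (Fin d) ℝ) (a : Fin d → ℝ) :
    ∑ i, ∑ j, a i * M i j * a j = a ⬝ᵥ M *ᵥ a := by
  simp [dotProduct, mulVec, Finset.mul_sum, mul_assoc]

private lemma quad_conj {d : ℕ} (A M : Matrix (Fin d) (Fin d) ℝ) (hAt : Aᵀ = A)
    (hiA : A⁻¹ * A = 1) (hAi : A * A⁻¹ = 1) (v : Fin d → ℝ) :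
    (A *ᵥ v) ⬝ᵥ (A⁻¹ * M * A⁻¹) *ᵥ (A *ᵥ v) = v ⬝ᵥ M *ᵥ v := by
  rw [mulVec_mulVec, Matrix.mul_assoc, Matrix.mul_assoc, hiA, Matrix.mul_one,
    ← hAt, ← vecMul_transpose, transpose_transpose, dotProduct_mulVec, vecMul_vecMul,
    hAt, ← Matrix.mul_assoc, hAi, Matrix.one_mul, ← dotProduct_mulVec]

private lemma sqrt_norm_aux (s1 s2 a : ℝ) (h : s2 = a * s1 * a) (ha : a ≠ 0) (hs1 : 0 ≤ s1) (c : ℝ)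
    (hc : 0 ≤ c) :
    (Real.sqrt (c * s1))⁻¹ = |a| * (Real.sqrt (c * s2))⁻¹ := by
  have h2 : c * s2 = (c * s1) * a ^ 2 := by rw [h]; ring
  have h3 : Real.sqrt (c * s2) = Real.sqrt (c * s1) * |a| := by
    rw [h2, Real.sqrt_mul (by positivity : (0:ℝ) ≤ c * s1), Real.sqrt_sq_eq_abs]
  rw [h3, mul_inv, ← mul_assoc, mul_comm |a|, mul_assoc,
    mul_inv_cancel₀ (abs_ne_zero.mpr ha), mul_one]

private lemma map_withDensity_comp {α β : Type*} [MeasurableSpace α] [MeasurableSpace β]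
    (μ : Measure α) (T : α → β) (hT : Measurable T) (g : β → ENNReal) (hg : Measurable g) :
    Measure.map T (μ.withDensity (g ∘ T)) = (Measure.map T μ).withDensity g := by
  ext s hs
  rw [Measure.map_apply hT hs, withDensity_apply _ (hT hs), withDensity_apply _ hs,
    setLIntegral_map hs hg hT]
  rfl

theorem gaussian_monge_pushforward {d : ℕ}
    (m1 m2 : EuclideanSpace ℝ (Fin d)) (S1 S2 : Matrix (Fin d) (Fin d) ℝ)
    (h1 : S1.PosDef) (h2 : S2.PosDef)
    (A : Matrix (Fin d) (Fin d) ℝ)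
    (hA : A = (msqrt S1)⁻¹ * msqrt (msqrt S1 * S2 * msqrt S1) * (msqrt S1)⁻¹)
    (T : EuclideanSpace ℝ (Fin d) → EuclideanSpace ℝ (Fin d))
    (hT : T = fun x => m2 + toE (A.mulVec (fromE (x - m1)))) :
    (gaussianMeasure m1 S1).map T = gaussianMeasure m2 S2 := by
  obtain ⟨hAt, hASA, hAdet⟩ := matrix_facts h1 h2 A hA
  have hiA : A⁻¹ * A = 1 := nonsing_inv_mul A hAdet.isUnit
  have hAi : A * A⁻¹ = 1 := mul_nonsing_inv A hAdet.isUnit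
  have hS2inv : S2⁻¹ = A⁻¹ * S1⁻¹ * A⁻¹ := by
    rw [← hASA, Matrix.mul_inv_rev, Matrix.mul_inv_rev, Matrix.mul_assoc]
  -- pointwise density identity
  have key : ∀ x, gaussianPdf m1 S1 x = |A.det| * gaussianPdf m2 S2 (T x) := by
    intro x
    have hcoord : ∀ i, (T x) i - m2 i = A.mulVec (fun j => x j - m1 j) i := by
      intro i; rw [hT]; simp [toE, fromE]
      try rfl
    have e1 : ∑ i, ∑ j, (x i - m1 i) * S1⁻¹ i j * (x j - m1 j)
        = (fun j => x j - m1 j) ⬝ᵥ S1⁻¹ *ᵥ (fun j => x j - m1 j) := sum_quad _ _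
    have e2 : ∑ i, ∑ j, ((T x) i - m2 i) * S2⁻¹ i j * ((T x) j - m2 j)
        = (A *ᵥ fun j => x j - m1 j) ⬝ᵥ S2⁻¹ *ᵥ (A *ᵥ fun j => x j - m1 j) := by
      simp_rw [hcoord]; exact sum_quad _ _
    unfold gaussianPdf
    rw [e1, e2, hS2inv, quad_conj A S1⁻¹ hAt hiA hAi,
      sqrt_norm_aux S1.det S2.det A.det (by rw [← hASA, det_mul, det_mul]) hAdet h1.det_pos.le
        ((2 * Real.pi) ^ d) (by positivity)]
    ring
  -- measurability
  have hg2m : Measurable fun x : EuclideanSpace ℝ (Fin d) =>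
      ENNReal.ofReal (gaussianPdf m2 S2 x) := by
    unfold gaussianPdf; fun_prop
  have hLm : Measurable fun z : EuclideanSpace ℝ (Fin d) => Matrix.toEuclideanLin A z :=
    (LinearMap.continuous_of_finiteDimensional _).measurable
  have hTeq : T = (fun z : EuclideanSpace ℝ (Fin d) => m2 + z) ∘
      (fun z => Matrix.toEuclideanLin A z) ∘ (fun x => x - m1) := by
    rw [hT]; rfl
  have hsub : Measurable fun x : EuclideanSpace ℝ (Fin d) => x - m1 :=
    measurable_id.sub measurable_const
  have hadd : Measurable fun z : EuclideanSpace ℝ (Fin d) => m2 + z :=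
    measurable_const.add measurable_id
  have hTm : Measurable T := by
    rw [hTeq]; exact hadd.comp (hLm.comp hsub)
  -- pushforward of volume
  have hdetLin : LinearMap.det (Matrix.toEuclideanLin A) = A.det := by
    rw [Matrix.toEuclideanLin_eq_toLin, LinearMap.det_toLin]
  have hvol : Measure.map T (volume : Measure (EuclideanSpace ℝ (Fin d)))
      = ENNReal.ofReal |A.det⁻¹| • volume := by
    rw [hTeq, ← Measure.map_map hadd (hLm.comp hsub), ← Measure.map_map hLm hsub]
    have hm1 : Measure.map (fun x : EuclideanSpace ℝ (Fin d) => x - m1) volume = volume := by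
      simp_rw [sub_eq_add_neg]
      exact (MeasureTheory.measurePreserving_add_right volume (-m1)).map_eq
    have hm2 : Measure.map (Matrix.toEuclideanLin A)
        (volume : Measure (EuclideanSpace ℝ (Fin d))) = ENNReal.ofReal |A.det⁻¹| • volume := by
      rw [Measure.map_linearMap_addHaar_eq_smul_addHaar volume (by rw [hdetLin]; exact hAdet),
        hdetLin]
    rw [hm1, hm2, Measure.map_smul,
      (MeasureTheory.measurePreserving_add_left volume m2).map_eq]
  -- assembly
  have hone : ENNReal.ofReal |A.det| * ENNReal.ofReal |A.det⁻¹| = 1 := by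
    rw [← ENNReal.ofReal_mul (abs_nonneg _), ← abs_mul, mul_inv_cancel₀ hAdet, abs_one,
      ENNReal.ofReal_one]
  calc (gaussianMeasure m1 S1).map T
      = Measure.map T (volume.withDensity
          (ENNReal.ofReal |A.det| • ((fun x => ENNReal.ofReal (gaussianPdf m2 S2 x)) ∘ T))) := by
        have hfun : (fun x => ENNReal.ofReal (gaussianPdf m1 S1 x))
            = ENNReal.ofReal |A.det| •
                ((fun x => ENNReal.ofReal (gaussianPdf m2 S2 x)) ∘ T) := by
          funext x
          simp only [Pi.smul_apply, Function.comp_apply, smul_eq_mul]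
          rw [key x, ENNReal.ofReal_mul (abs_nonneg _)]
        unfold gaussianMeasure
        rw [hfun]
    _ = ENNReal.ofReal |A.det| •
          Measure.map T (volume.withDensity
            ((fun x => ENNReal.ofReal (gaussianPdf m2 S2 x)) ∘ T)) := by
        rw [withDensity_smul _ (hg2m.comp hTm), Measure.map_smul]
    _ = ENNReal.ofReal |A.det| • (Measure.map T volume).withDensity
          (fun x => ENNReal.ofReal (gaussianPdf m2 S2 x)) := by
        rw [map_withDensity_comp _ _ hTm _ hg2m]
    _ = gaussianMeasure m2 S2 := by
        rw [hvol, withDensity_smul_measure, smul_smul, hone, one_smul]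
        rfl
end

section
/- With the notation and assumptions of the previous statement (target distribution $\mathcal{P}_t = m_\#\mathcal{P}_s$ with $m(x,y)=(T(x),y)$, loss $M_L$-Lipschitz in second argument, predictor $f$ $M_f$-Lipschitz, and $\hat T(x) = \hat m_2 + \hat A(x-\hat m_1)$ with $\hat A$ invertible), one has $R_t(f \circ \hat T^{-1}) \leq R_s(f) + M_f M_L \|\hat A^{-1}\| \, d(T, \hat T)$, where $d(T,\hat T) = \mathbb{E}_{x \sim \mu_s}\left[\|T(x) - \hat T(x)\|\right]$ and $\mu_s$ is the feature marginal of $\mathcal{P}_s$. -/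
open Matrix MeasureTheory

theorem otda_risk_bound_linear {d : ℕ} {Y : Type*} [MeasurableSpace Y]
    (Ps Pt : Measure (EuclideanSpace ℝ (Fin d) × Y)) [IsProbabilityMeasure Ps]
    (L : Y → ℝ → ℝ) (hLpos : ∀ y t, 0 ≤ L y t)
    (ML Mf : NNReal) (hL : ∀ y, LipschitzWith ML (L y))
    (f : EuclideanSpace ℝ (Fin d) → ℝ) (hf : LipschitzWith Mf f)
    (T : EuclideanSpace ℝ (Fin d) → EuclideanSpace ℝ (Fin d)) (hTmeas : Measurable T)
    (hPt : Pt = Ps.map fun p => (T p.1, p.2))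
    (mh1 mh2 : EuclideanSpace ℝ (Fin d)) (Ah : Matrix (Fin d) (Fin d) ℝ)
    (hAh : IsUnit Ah)
    (Th Thinv : EuclideanSpace ℝ (Fin d) → EuclideanSpace ℝ (Fin d))
    (hTh : Th = fun x => mh2 + toE (Ah.mulVec (fromE (x - mh1))))
    (hThinv : Thinv = fun z => mh1 + toE (Ah⁻¹.mulVec (fromE (z - mh2))))
    (hint1 : Integrable (fun p => L p.2 (f p.1)) Ps)
    (hint2 : Integrable (fun x => ‖T x - Th x‖) (Ps.map Prod.fst)) :
    (∫ p, L p.2 (f (Thinv p.1)) ∂Pt) ≤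
      (∫ p, L p.2 (f p.1) ∂Ps) +
        (Mf : ℝ) * (ML : ℝ) * opNorm Ah⁻¹ * ∫ x, ‖T x - Th x‖ ∂(Ps.map Prod.fst) := by

  classical
  let E := EuclideanSpace ℝ (Fin d)
  have hCnn : (0:ℝ) ≤ (Mf : ℝ) * (ML : ℝ) * opNorm Ah⁻¹ := by
    have : (0:ℝ) ≤ opNorm Ah⁻¹ := norm_nonneg _
    positivity
  have hdet : Ah⁻¹ * Ah = 1 :=
    Matrix.nonsing_inv_mul Ah ((Matrix.isUnit_iff_isUnit_det Ah).mp hAh)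
  have hinv : ∀ x : E, Thinv (Th x) = x := by
    intro x
    simp [hTh, hThinv, toE, fromE, add_sub_cancel_left, Matrix.mulVec_mulVec, hdet,
      Matrix.one_mulVec, add_sub_cancel]
  have hlin : ∀ z z' : E, Thinv z - Thinv z' =
      (LinearMap.toContinuousLinearMap (Matrix.toEuclideanLin Ah⁻¹)) (z - z') := by
    intro z z'
    have hg : ∀ w : EuclideanSpace ℝ (Fin d), toE (Ah⁻¹.mulVec (fromE w)) =
        (LinearMap.toContinuousLinearMap (Matrix.toEuclideanLin Ah⁻¹)) w := fun w => rfl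
    simp only [hThinv, hg]
    rw [add_sub_add_left_eq_sub, ← map_sub, sub_sub_sub_cancel_right]
  have key : ∀ z z' : E, ‖Thinv z - Thinv z'‖ ≤ opNorm Ah⁻¹ * ‖z - z'‖ := by
    intro z z'
    rw [hlin]
    exact (LinearMap.toContinuousLinearMap (Matrix.toEuclideanLin Ah⁻¹)).le_opNorm _
  have hpt : ∀ p : E × Y, L p.2 (f (Thinv (T p.1))) ≤
      L p.2 (f p.1) + (Mf : ℝ) * (ML : ℝ) * opNorm Ah⁻¹ * ‖T p.1 - Th p.1‖ := by
    intro p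
    have h1 : dist (L p.2 (f (Thinv (T p.1)))) (L p.2 (f p.1))
        ≤ (ML : ℝ) * dist (f (Thinv (T p.1))) (f p.1) := (hL p.2).dist_le_mul _ _
    have h2 : dist (f (Thinv (T p.1))) (f p.1)
        ≤ (Mf : ℝ) * dist (Thinv (T p.1)) p.1 := hf.dist_le_mul _ _
    have h3 : dist (Thinv (T p.1)) p.1 ≤ opNorm Ah⁻¹ * ‖T p.1 - Th p.1‖ := by
      calc dist (Thinv (T p.1)) p.1 = ‖Thinv (T p.1) - Thinv (Th p.1)‖ := by
            rw [hinv p.1, dist_eq_norm]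
        _ ≤ opNorm Ah⁻¹ * ‖T p.1 - Th p.1‖ := key _ _
    have := abs_sub_abs_le_abs_sub (L p.2 (f (Thinv (T p.1)))) (L p.2 (f p.1))
    have hML : (0:ℝ) ≤ (ML : ℝ) := ML.coe_nonneg
    have hMf : (0:ℝ) ≤ (Mf : ℝ) := Mf.coe_nonneg
    have h4 : L p.2 (f (Thinv (T p.1))) - L p.2 (f p.1)
        ≤ (ML : ℝ) * ((Mf : ℝ) * (opNorm Ah⁻¹ * ‖T p.1 - Th p.1‖)) := by
      have := h1
      rw [Real.dist_eq] at this
      nlinarith [abs_nonneg (L p.2 (f (Thinv (T p.1))) - L p.2 (f p.1)),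
        le_abs_self (L p.2 (f (Thinv (T p.1))) - L p.2 (f p.1)), h2, h3,
        mul_le_mul_of_nonneg_left h2 hML,
        mul_le_mul_of_nonneg_left (mul_le_mul_of_nonneg_left h3 hMf) hML]
    linarith [h4]
  by_cases hg : Integrable (fun p : E × Y => L p.2 (f (Thinv p.1))) Pt
  · have hm : Measurable (fun p : E × Y => (T p.1, p.2)) :=
      (hTmeas.comp measurable_fst).prodMk measurable_snd
    rw [hPt] at hg ⊢
    rw [integral_map hm.aemeasurable hg.aestronglyMeasurable]
    have hgcomp : Integrable (fun p : E × Y => L p.2 (f (Thinv (T p.1)))) Ps :=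
      (integrable_map_measure hg.aestronglyMeasurable hm.aemeasurable).mp hg
    have hint2' : Integrable (fun p : E × Y => ‖T p.1 - Th p.1‖) Ps :=
      (integrable_map_measure hint2.aestronglyMeasurable
        measurable_fst.aemeasurable).mp hint2
    have hrhs : Integrable (fun p : E × Y =>
        L p.2 (f p.1) + (Mf : ℝ) * (ML : ℝ) * opNorm Ah⁻¹ * ‖T p.1 - Th p.1‖) Ps :=
      hint1.add (hint2'.const_mul _)
    calc (∫ p, L p.2 (f (Thinv (T p.1))) ∂Ps)
        ≤ ∫ p, (L p.2 (f p.1) + (Mf : ℝ) * (ML : ℝ) * opNorm Ah⁻¹ * ‖T p.1 - Th p.1‖) ∂Ps :=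
          integral_mono hgcomp hrhs hpt
      _ = (∫ p, L p.2 (f p.1) ∂Ps) +
          (Mf : ℝ) * (ML : ℝ) * opNorm Ah⁻¹ * ∫ p, ‖T p.1 - Th p.1‖ ∂Ps := by
          rw [integral_add hint1 (hint2'.const_mul _), integral_const_mul]
      _ = (∫ p, L p.2 (f p.1) ∂Ps) +
          (Mf : ℝ) * (ML : ℝ) * opNorm Ah⁻¹ * ∫ x, ‖T x - Th x‖ ∂(Ps.map Prod.fst) := by
          rw [integral_map measurable_fst.aemeasurable hint2.aestronglyMeasurable]
  · rw [integral_undef hg]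
    have h1 : 0 ≤ ∫ p, L p.2 (f p.1) ∂Ps := integral_nonneg fun p => hLpos _ _
    have h2 : 0 ≤ ∫ x, ‖T x - Th x‖ ∂(Ps.map Prod.fst) :=
      integral_nonneg fun x => norm_nonneg _
    nlinarith
end
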